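/- arXiv:2209.14391 — 3 statements merged into one kernel-verified Lean document; each statement's English description precedes it below -/
import Mathlib

section
/- Suppose Y = X'τ, X ⊥ τ | V, and Q(v) = E[XX' | V = v] is invertible almost surely. Then E[Q(V)⁻¹ X Y] = E[τ]. That is, the inverse-weighted moment identifies the average of the random coefficients. -/
/-
Conditionally on `V`, the matrix `Q` is constant and `X`, `τ` are independent, so
`E[X Y | V] = E[X X' | V] E[τ | V] = Q E[τ | V]`; multiplying by `Q⁻¹` and averaging over `V`
gives `E[τ]`. The conditioning is done fibrewise with the regular conditional distribution
`condExpKernel`: on a fibre `Q` is a fixed matrix and independence makes each `X_i X_j τ_j`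
integrable, so no integrability of these products is needed globally.
-/

open MeasureTheory ProbabilityTheory Matrix

namespace ProbabilityTheory

section CondExpKernel

variable {Ω : Type*} {m : MeasurableSpace Ω} [mΩ : MeasurableSpace Ω] [StandardBorelSpace Ω]
  {μ : Measure Ω} [IsFiniteMeasure μ]

lemma ae_ae_eq_of_measurable_condExpKernel {β : Type*} [MeasurableSpace β] [MeasurableEq β]
    (hm : m ≤ mΩ) {g : Ω → β} (hg : Measurable[m] g) :
    ∀ᵐ ω ∂μ, ∀ᵐ ω' ∂condExpKernel μ m ω, g ω' = g ω := by
  have hmeas : Measurable[mΩ, m.prod mΩ] (Function.diag : Ω → Ω × Ω) :=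
    (measurable_id'' hm).prodMk measurable_id
  have hset : MeasurableSet[m.prod mΩ] {p : Ω × Ω | g p.2 = g p.1} :=
    measurableSet_eq_fun ((hg.mono hm le_rfl).comp measurable_snd) (hg.comp measurable_fst)
  -- `μ.trim hm ⊗ₘ condExpKernel μ m` is the law of `(ω, ω)`, which lives on the diagonal.
  have hdiag : ∀ᵐ p ∂(μ.trim hm ⊗ₘ condExpKernel μ m), g p.2 = g p.1 := by
    rw [compProd_trim_condExpKernel]
    exact (ae_map_iff ⟨_, hmeas, Filter.EventuallyEq.rfl⟩ hset).2 (ae_of_all _ fun _ => rfl)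
  exact ae_of_ae_trim hm (Measure.ae_ae_of_ae_compProd hdiag)

lemma CondIndepFun.ae_indepFun_condExpKernel {β β' : Type*} [MeasurableSpace β]
    [MeasurableSpace β'] [MeasurableSpace.CountableOrCountablyGenerated Ω (β × β')]
    (hm : m ≤ mΩ) {f : Ω → β} {g : Ω → β'} (hf : Measurable f) (hg : Measurable g)
    (h : CondIndepFun m hm f g μ) :
    ∀ᵐ ω ∂μ, IndepFun f g (condExpKernel μ m ω) := by
  filter_upwards [ae_of_ae_trim hm ((condIndepFun_iff_map_prod_eq_prod_map_map hf hg).1 h)]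
    with ω hω
  rw [indepFun_iff_map_prod_eq_prod_map_map hf.aemeasurable hg.aemeasurable]
  simpa [Kernel.map_apply _ (hf.prodMk hg), Kernel.map_apply _ hf, Kernel.map_apply _ hg,
    Kernel.prod_apply] using hω

lemma integral_integral_condExpKernel {F : Type*} [NormedAddCommGroup F] [NormedSpace ℝ F]
    [CompleteSpace F] (hm : m ≤ mΩ) {f : Ω → F} (hf : Integrable f μ) :
    ∫ ω, ∫ y, f y ∂condExpKernel μ m ω ∂μ = ∫ ω, f ω ∂μ := by
  rw [← integral_congr_ae (condExp_ae_eq_integral_condExpKernel hm hf), integral_condExp hm]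

end CondExpKernel

end ProbabilityTheory

lemma integral_mulVec {Ω m n : Type*} [MeasurableSpace Ω] [Fintype m] [Fintype n] {μ : Measure Ω}
    (A : Matrix m n ℝ) {f : Ω → n → ℝ} (hf : Integrable f μ) :
    ∫ ω, A *ᵥ f ω ∂μ = A *ᵥ ∫ ω, f ω ∂μ :=
  A.mulVecLin.toContinuousLinearMap.integral_comp_comm hf

noncomputable def secondMomentMatrix {Ω n : Type*} [MeasurableSpace Ω] (X : Ω → n → ℝ)
    (ν : Measure Ω) : Matrix n n ℝ :=
  Matrix.of fun i j => ∫ ω, X ω i * X ω j ∂ν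

lemma dotProduct_smul_apply {n : Type*} [Fintype n] (x t : n → ℝ) (i : n) :
    ((x ⬝ᵥ t) • x) i = ∑ j, x i * x j * t j := by
  simp only [Pi.smul_apply, smul_eq_mul, dotProduct, Finset.sum_mul]
  exact Finset.sum_congr rfl fun j _ => by ring

namespace ProbabilityTheory.IndepFun

variable {Ω n : Type*} [MeasurableSpace Ω] {ν : Measure Ω} {X τ : Ω → n → ℝ}

lemma mul_eval_eval (h : IndepFun X τ ν) (i j : n) :
    IndepFun (fun ω => X ω i * X ω j) (fun ω => τ ω j) ν :=
  h.comp (φ := fun x : n → ℝ => x i * x j) (ψ := fun x : n → ℝ => x j)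
    ((measurable_pi_apply i).mul (measurable_pi_apply j)) (measurable_pi_apply j)

variable [Fintype n] (h : IndepFun X τ ν) (hXX : ∀ i j, Integrable (fun ω => X ω i * X ω j) ν)
  (hτ : Integrable τ ν)
include h hXX hτ

lemma integrable_mul_eval (i j : n) :
    Integrable (fun ω => X ω i * X ω j * τ ω j) ν :=
  (h.mul_eval_eval i j).integrable_mul (hXX i j) (hτ.eval j)

lemma integrable_dotProduct_smul : Integrable (fun ω => (X ω ⬝ᵥ τ ω) • X ω) ν := by
  refine Integrable.of_eval fun i => ?_
  simp only [dotProduct_smul_apply]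
  exact integrable_finsetSum _ fun j _ => h.integrable_mul_eval hXX hτ i j

lemma integral_dotProduct_smul :
    ∫ ω, (X ω ⬝ᵥ τ ω) • X ω ∂ν = secondMomentMatrix X ν *ᵥ ∫ ω, τ ω ∂ν := by
  ext i
  rw [eval_integral (h.integrable_dotProduct_smul hXX hτ).eval]
  simp only [dotProduct_smul_apply]
  rw [integral_finsetSum _ fun j _ => h.integrable_mul_eval hXX hτ i j]
  refine Finset.sum_congr rfl fun j _ => ?_
  rw [eval_integral hτ.eval]
  exact (h.mul_eval_eval i j).integral_mul_eq_mul_integral (hXX i j).aestronglyMeasurable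
    (hτ.eval j).aestronglyMeasurable

lemma integral_inv_secondMomentMatrix_mulVec [DecidableEq n]
    (hdet : IsUnit (secondMomentMatrix X ν).det) :
    ∫ ω, (secondMomentMatrix X ν)⁻¹ *ᵥ ((X ω ⬝ᵥ τ ω) • X ω) ∂ν = ∫ ω, τ ω ∂ν := by
  rw [integral_mulVec _ (h.integrable_dotProduct_smul hXX hτ), h.integral_dotProduct_smul hXX hτ,
    mulVec_mulVec, nonsing_inv_mul _ hdet, one_mulVec]

end ProbabilityTheory.IndepFun

theorem integral_inverse_weighted_eq_integral_coeff_general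
    {Ω 𝒱 : Type*} [mΩ : MeasurableSpace Ω] [StandardBorelSpace Ω] [MeasurableSpace 𝒱]
    {μ : Measure Ω} [IsProbabilityMeasure μ] {k : ℕ}
    (X τ : Ω → Fin k → ℝ) (V : Ω → 𝒱) (Y : Ω → ℝ)
    (Q : Ω → Matrix (Fin k) (Fin k) ℝ)
    (hX : Measurable X) (hτ : Measurable τ)
    (hle : MeasurableSpace.comap V inferInstance ≤ mΩ)
    (hindep : CondIndepFun (MeasurableSpace.comap V inferInstance) hle X τ μ)
    (hY : ∀ ω, Y ω = ∑ j, X ω j * τ ω j)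
    -- `Q` is a function of `V` (measurable w.r.t. σ(V)) ...
    (hQmeas : ∀ i j, Measurable[MeasurableSpace.comap V inferInstance] fun ω => Q ω i j)
    -- ... and is a version of the conditional second moment matrix `E[XX' | V]`:
    (hQ : ∀ i j, (fun ω => Q ω i j) =ᵐ[μ]
      μ[fun ω => X ω i * X ω j | MeasurableSpace.comap V inferInstance])
    -- `Q(V)` is invertible almost surely:
    (hQinv : ∀ᵐ ω ∂μ, IsUnit (Q ω).det)
    (hintXX : ∀ i j, Integrable (fun ω => X ω i * X ω j) μ)
    (hintτ : Integrable τ μ)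
    (hintW : Integrable (fun ω => (Q ω)⁻¹ *ᵥ (Y ω • X ω)) μ) :
    ∫ ω, (Q ω)⁻¹ *ᵥ (Y ω • X ω) ∂μ = ∫ ω, τ ω ∂μ := by
  set κ := condExpKernel μ (MeasurableSpace.comap V inferInstance)
  have hQ_fibre : ∀ᵐ ω ∂μ, secondMomentMatrix X (κ ω) = Q ω := by
    filter_upwards [ae_all_iff.2 fun i => ae_all_iff.2 fun j =>
      (hQ i j).trans (condExp_ae_eq_integral_condExpKernel hle (hintXX i j))] with ω hω
    exact Matrix.ext fun i j => (hω i j).symm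
  have hQ_const : ∀ᵐ ω ∂μ, ∀ᵐ ω' ∂κ ω, Q ω' = Q ω :=
    ae_ae_eq_of_measurable_condExpKernel (β := Fin k → Fin k → ℝ) hle (by fun_prop)
  rw [← integral_integral_condExpKernel hle hintW, ← integral_integral_condExpKernel hle hintτ]
  refine integral_congr_ae ?_
  filter_upwards [hindep.ae_indepFun_condExpKernel hle hX hτ, hQ_fibre, hQ_const, hQinv,
    ae_all_iff.2 fun i => ae_all_iff.2 fun j => (hintXX i j).condExpKernel_ae,
    hintτ.condExpKernel_ae] with ω hind hQω hQω_const hdet hXXω hτω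
  rw [← hind.integral_inv_secondMomentMatrix_mulVec hXXω hτω (hQω ▸ hdet)]
  refine integral_congr_ae ?_
  filter_upwards [hQω_const] with ω' hω'
  rw [hQω, hω', hY]
  rfl

/-- If `Y = X'τ`, `X ⊥ τ | V`, and `Q(V) = E[XX' | V]` is invertible a.s.,
then the inverse-weighted moment identifies the mean random coefficient:
`E[Q(V)⁻¹ X Y] = E[τ]`. -/
theorem integral_inverse_weighted_eq_integral_coeff
    {Ω 𝒱 : Type*} [mΩ : MeasurableSpace Ω] [StandardBorelSpace Ω] [MeasurableSpace 𝒱]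
    {μ : Measure Ω} [IsProbabilityMeasure μ] {k : ℕ}
    (X τ : Ω → Fin k → ℝ) (V : Ω → 𝒱) (Y : Ω → ℝ)
    (Q : Ω → Matrix (Fin k) (Fin k) ℝ)
    (hX : Measurable X) (hτ : Measurable τ) (hV : Measurable V)
    (hle : MeasurableSpace.comap V inferInstance ≤ mΩ)
    (hindep : CondIndepFun (MeasurableSpace.comap V inferInstance) hle X τ μ)
    (hY : ∀ ω, Y ω = ∑ j, X ω j * τ ω j)
    -- `Q` is a function of `V` (measurable w.r.t. σ(V)) ...
    (hQmeas : ∀ i j, Measurable[MeasurableSpace.comap V inferInstance] fun ω => Q ω i j)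
    -- ... and is a version of the conditional second moment matrix `E[XX' | V]`:
    (hQ : ∀ i j, (fun ω => Q ω i j) =ᵐ[μ]
      μ[fun ω => X ω i * X ω j | MeasurableSpace.comap V inferInstance])
    -- `Q(V)` is invertible almost surely:
    (hQinv : ∀ᵐ ω ∂μ, IsUnit (Q ω).det)
    (hintXX : ∀ i j, Integrable (fun ω => X ω i * X ω j) μ)
    (hintτ : Integrable τ μ)
    (hintW : Integrable (fun ω => (Q ω)⁻¹ *ᵥ (Y ω • X ω)) μ) :
    ∫ ω, (Q ω)⁻¹ *ᵥ (Y ω • X ω) ∂μ = ∫ ω, τ ω ∂μ :=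
  integral_inverse_weighted_eq_integral_coeff_general (mΩ := mΩ) X τ V Y Q hX hτ hle hindep hY
    hQmeas hQ hQinv hintXX hintτ hintW
end

section
/- Let (D, T) be random variables and P = (p_d, p_f, L) a measurable function of a random vector C such that, conditional on C, D is Bernoulli(p_d), T is Binomial(L, p_f), and D ⊥ T | C. Then (D, T) ⊥ C | P. That is, P is a balancing score. -/
open MeasureTheory ProbabilityTheory
open scoped ProbabilityTheory

/-!
Conditionally on `C`, the law of `(D, T)` is `Bernoulli(p_d) ⊗ Binomial(L, p_f)`, which depends on
`C` only through `P`. In general, if `μ⟦A | m₂⟧` has an `m₁`-measurable version for some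
`m₁ ≤ m₂`, then the tower property and pulling out that version give
`μ⟦A ∩ B | m₁⟧ = μ⟦A | m₁⟧ * μ⟦B | m₁⟧` for every `B ∈ m₂`. Applied to `m₁ = σ(P)`, `m₂ = σ(C)`
and the fibres of `(D, T)`, which form a generating π-system of `σ(D, T)`, this is
`(D, T) ⊥ C | P`.
-/

section Fibers

variable {Ω α : Type*} (X : Ω → α)

theorem isPiSystem_range_preimage_singleton : IsPiSystem (Set.range fun x => X ⁻¹' {x}) := by
  rintro _ ⟨x, rfl⟩ _ ⟨y, rfl⟩ ⟨ω, rfl, rfl⟩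
  exact ⟨X ω, (Set.inter_self _).symm⟩

theorem comap_eq_generateFrom_range_preimage_singleton [MeasurableSpace α]
    [MeasurableSingletonClass α] [Countable α] :
    MeasurableSpace.comap X inferInstance =
      MeasurableSpace.generateFrom (Set.range fun x => X ⁻¹' {x}) := by
  refine le_antisymm ?_ (MeasurableSpace.generateFrom_le ?_)
  · rintro _ ⟨s, -, rfl⟩
    rw [← Set.biUnion_of_singleton s, Set.preimage_iUnion₂]
    exact .biUnion s.to_countable fun x _ => .basic _ ⟨x, rfl⟩
  · rintro _ ⟨x, rfl⟩
    exact ⟨{x}, measurableSet_singleton x, rfl⟩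

end Fibers

namespace ProbabilityTheory

variable {Ω : Type*} {m₁ m₂ mΩ : MeasurableSpace Ω} {μ : Measure Ω} [IsFiniteMeasure μ]

theorem condExp_compl_ae_eq_one_sub (hm : m₂ ≤ mΩ) {A : Set Ω} (hA : MeasurableSet A) :
    μ⟦Aᶜ | m₂⟧ =ᵐ[μ] 1 - μ⟦A | m₂⟧ := by
  rw [Set.indicator_compl]
  refine (condExp_sub (integrable_const 1) ((integrable_const 1).indicator hA) m₂).trans ?_
  rw [condExp_const hm]
  rfl

theorem condExp_inter_ae_eq_mul_of_aestronglyMeasurable (hm₁₂ : m₁ ≤ m₂) (hm₂ : m₂ ≤ mΩ)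
    {A B : Set Ω} (hA : MeasurableSet A) (hB : MeasurableSet[m₂] B)
    (hAm : AEStronglyMeasurable[m₁] (μ⟦A | m₂⟧) μ) :
    μ⟦A ∩ B | m₁⟧ =ᵐ[μ] μ⟦A | m₁⟧ * μ⟦B | m₁⟧ := by
  set g := μ⟦A | m₂⟧
  have hgA : μ⟦A | m₁⟧ =ᵐ[μ] g :=
    (condExp_condExp_of_le hm₁₂ hm₂).symm.trans
      (condExp_of_aestronglyMeasurable' (hm₁₂.trans hm₂) hAm integrable_condExp)
  have hind : B.indicator g = g * B.indicator 1 := by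
    ext ω
    by_cases h : ω ∈ B <;> simp [h]
  have hAB : μ⟦A ∩ B | m₂⟧ =ᵐ[μ] g * B.indicator 1 := by
    rw [Set.inter_comm, ← Set.indicator_indicator, ← hind]
    exact condExp_indicator ((integrable_const 1).indicator hA) hB
  calc μ⟦A ∩ B | m₁⟧ =ᵐ[μ] μ[μ⟦A ∩ B | m₂⟧ | m₁] := (condExp_condExp_of_le hm₁₂ hm₂).symm
    _ =ᵐ[μ] μ[g * B.indicator 1 | m₁] := condExp_congr_ae hAB
    _ =ᵐ[μ] g * μ⟦B | m₁⟧ := condExp_mul_of_aestronglyMeasurable_left hAm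
        (hind ▸ integrable_condExp.indicator (hm₂ _ hB)) ((integrable_const 1).indicator (hm₂ _ hB))
    _ =ᵐ[μ] μ⟦A | m₁⟧ * μ⟦B | m₁⟧ := hgA.symm.mul .rfl

theorem aestronglyMeasurable_condExp_preimage_singleton_of_le_one (hm₂ : m₂ ≤ mΩ) {D : Ω → ℕ}
    (hD : Measurable D) (hD01 : ∀ ω, D ω ≤ 1)
    (h1 : AEStronglyMeasurable[m₁] (μ⟦D ⁻¹' {1} | m₂⟧) μ) (d : ℕ) :
    AEStronglyMeasurable[m₁] (μ⟦D ⁻¹' {d} | m₂⟧) μ := by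
  rcases d with _ | _ | d
  · have h0 : D ⁻¹' {0} = (D ⁻¹' {1})ᶜ := by
      ext ω
      have := hD01 ω
      simp only [Set.mem_preimage, Set.mem_singleton_iff, Set.mem_compl_iff]
      omega
    rw [h0]
    exact (aestronglyMeasurable_const.sub h1).congr
      (condExp_compl_ae_eq_one_sub hm₂ (hD (measurableSet_singleton 1))).symm
  · exact h1
  · have hempty : D ⁻¹' {d + 2} = ∅ := by
      ext ω
      have := hD01 ω
      simp only [Set.mem_preimage, Set.mem_singleton_iff, Set.mem_empty_iff_false, iff_false]
      omega
    rw [hempty, Set.indicator_empty, ← Pi.zero_def, condExp_zero]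
    exact aestronglyMeasurable_zero

theorem condIndep_comap_of_aestronglyMeasurable_condExp_preimage_singleton [StandardBorelSpace Ω]
    {α : Type*} [MeasurableSpace α] [MeasurableSingletonClass α] [Countable α]
    (hm₁₂ : m₁ ≤ m₂) (hm₂ : m₂ ≤ mΩ) {X : Ω → α} (hX : Measurable X)
    (hXm : ∀ x, AEStronglyMeasurable[m₁] (μ⟦X ⁻¹' {x} | m₂⟧) μ) :
    CondIndep m₁ (MeasurableSpace.comap X inferInstance) m₂ (hm₁₂.trans hm₂) μ := by
  refine CondIndepSets.condIndep hX.comap_le hm₂ (isPiSystem_range_preimage_singleton X)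
    (@MeasurableSpace.isPiSystem_measurableSet Ω m₂)
    (comap_eq_generateFrom_range_preimage_singleton X)
    (@MeasurableSpace.generateFrom_measurableSet Ω m₂).symm ?_
  refine (condIndepSets_iff _ _ _ _ ?_ hm₂ μ).2 ?_
  · rintro _ ⟨x, rfl⟩
    exact hX (measurableSet_singleton x)
  · rintro _ B ⟨x, rfl⟩ hB
    exact condExp_inter_ae_eq_mul_of_aestronglyMeasurable hm₁₂ hm₂
      (hX (measurableSet_singleton x)) hB (hXm x)

end ProbabilityTheory

theorem network_propensity_score_balancing_general
    {Ω γ : Type*} [mΩ : MeasurableSpace Ω] [StandardBorelSpace Ω] [MeasurableSpace γ]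
    {μ : Measure Ω} [IsProbabilityMeasure μ]
    (C : Ω → γ) (D T : Ω → ℕ)
    (p_d p_f : γ → ℝ) (L : γ → ℕ)
    (hD : Measurable D) (hT : Measurable T)
    (hpd : Measurable p_d) (hpf : Measurable p_f) (hLm : Measurable L)
    (hD01 : ∀ ω, D ω ≤ 1)
    (hleC : MeasurableSpace.comap C inferInstance ≤ mΩ)
    (hleP : MeasurableSpace.comap (fun ω => (p_d (C ω), p_f (C ω), L (C ω)))
      inferInstance ≤ mΩ)
    -- `D | C ~ Bernoulli(p_d(C))`:
    (hDdist : μ⟦{ω | D ω = 1} | MeasurableSpace.comap C inferInstance⟧ =ᵐ[μ]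
      fun ω => p_d (C ω))
    -- `T | C ~ Binomial(L(C), p_f(C))`:
    (hTdist : ∀ k : ℕ, μ⟦{ω | T ω = k} | MeasurableSpace.comap C inferInstance⟧ =ᵐ[μ]
      fun ω => ((L (C ω)).choose k : ℝ) * p_f (C ω) ^ k *
        (1 - p_f (C ω)) ^ (L (C ω) - k))
    -- `D ⊥ T | C`:
    (hDT : CondIndepFun (MeasurableSpace.comap C inferInstance) hleC D T μ) :
    CondIndepFun (MeasurableSpace.comap (fun ω => (p_d (C ω), p_f (C ω), L (C ω)))
      inferInstance) hleP (fun ω => (D ω, T ω)) C μ := by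
  set P := fun ω => (p_d (C ω), p_f (C ω), L (C ω))
  have hPC : MeasurableSpace.comap P inferInstance ≤ MeasurableSpace.comap C inferInstance :=
    ((hpd.prodMk (hpf.prodMk hLm)).comp (comap_measurable C)).comap_le
  have hP : ∀ {g : ℝ × ℝ × ℕ → ℝ}, Measurable g →
      AEStronglyMeasurable[MeasurableSpace.comap P inferInstance] (g ∘ P) μ :=
    fun hg => (hg.comp (comap_measurable P)).stronglyMeasurable.aestronglyMeasurable
  have hDm := aestronglyMeasurable_condExp_preimage_singleton_of_le_one hleC hD hD01
    ((hP measurable_fst).congr hDdist.symm)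
  have hTm : ∀ k, AEStronglyMeasurable[MeasurableSpace.comap P inferInstance]
      (μ⟦T ⁻¹' {k} | MeasurableSpace.comap C inferInstance⟧) μ := fun k =>
    (hP (g := fun x => (x.2.2.choose k : ℝ) * x.2.1 ^ k * (1 - x.2.1) ^ (x.2.2 - k))
      (by fun_prop)).congr (hTdist k).symm
  have hX : ∀ x : ℕ × ℕ, AEStronglyMeasurable[MeasurableSpace.comap P inferInstance]
      (μ⟦(fun ω => (D ω, T ω)) ⁻¹' {x} | MeasurableSpace.comap C inferInstance⟧) μ := by
    rintro ⟨d, k⟩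
    have hfib : (fun ω => (D ω, T ω)) ⁻¹' {(d, k)} = D ⁻¹' {d} ∩ T ⁻¹' {k} := by
      ext ω
      simp
    rw [hfib]
    exact ((hDm d).mul (hTm k)).congr ((condIndepFun_iff_condExp_inter_preimage_eq_mul hD hT).1
      hDT _ _ (measurableSet_singleton d) (measurableSet_singleton k)).symm
  exact (condIndepFun_iff_condIndep _ _ _ _ _).2
    (condIndep_comap_of_aestronglyMeasurable_condExp_preimage_singleton hPC hleC (hD.prodMk hT) hX)

/-- **Balancing.** Suppose that, conditionally on covariates `C`,
`D` is `Bernoulli(p_d(C))`, `T` is `Binomial(L(C), p_f(C))`, and `D ⊥ T | C`.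
Then the network propensity score `P = (p_d(C), p_f(C), L(C))` is a balancing score:
`(D, T) ⊥ C | P`. -/
theorem network_propensity_score_balancing
    {Ω γ : Type*} [mΩ : MeasurableSpace Ω] [StandardBorelSpace Ω] [MeasurableSpace γ]
    {μ : Measure Ω} [IsProbabilityMeasure μ]
    (C : Ω → γ) (D T : Ω → ℕ)
    (p_d p_f : γ → ℝ) (L : γ → ℕ)
    (hC : Measurable C) (hD : Measurable D) (hT : Measurable T)
    (hpd : Measurable p_d) (hpf : Measurable p_f) (hLm : Measurable L)
    (hD01 : ∀ ω, D ω ≤ 1)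
    (hpd01 : ∀ c, p_d c ∈ Set.Icc (0:ℝ) 1) (hpf01 : ∀ c, p_f c ∈ Set.Icc (0:ℝ) 1)
    (hleC : MeasurableSpace.comap C inferInstance ≤ mΩ)
    (hleP : MeasurableSpace.comap (fun ω => (p_d (C ω), p_f (C ω), L (C ω)))
      inferInstance ≤ mΩ)
    -- `D | C ~ Bernoulli(p_d(C))`:
    (hDdist : μ⟦{ω | D ω = 1} | MeasurableSpace.comap C inferInstance⟧ =ᵐ[μ]
      fun ω => p_d (C ω))
    -- `T | C ~ Binomial(L(C), p_f(C))`: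
    (hTdist : ∀ k : ℕ, μ⟦{ω | T ω = k} | MeasurableSpace.comap C inferInstance⟧ =ᵐ[μ]
      fun ω => ((L (C ω)).choose k : ℝ) * p_f (C ω) ^ k *
        (1 - p_f (C ω)) ^ (L (C ω) - k))
    -- `D ⊥ T | C`:
    (hDT : CondIndepFun (MeasurableSpace.comap C inferInstance) hleC D T μ) :
    CondIndepFun (MeasurableSpace.comap (fun ω => (p_d (C ω), p_f (C ω), L (C ω)))
      inferInstance) hleP (fun ω => (D ω, T ω)) C μ :=
  network_propensity_score_balancing_general (mΩ := mΩ) C D T p_d p_f L hD hT hpd hpf hLm hD01 hleC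
    hleP hDdist hTdist hDT
end

section
/- (Balancing plus selection-on-observables implies unconfoundedness given the score) Suppose X ⊥ C | P where P is a measurable function of C, and suppose X ⊥ τ | C. Then X ⊥ τ | P. -/
/-!
Since `P` is a function of `C`, `σ(P) ≤ σ(C)`, and the balancing property `X ⊥ C | P` says
that `E[1_{X ∈ A} | C] = E[1_{X ∈ A} | P]`. Conditioning `1_{X ∈ A} 1_{τ ∈ B}` first on `C`
and then on `P`, selection on observables and this identity give
`E[1_{X ∈ A} 1_{τ ∈ B} | P] = E[E[1_{X ∈ A} | P] E[1_{τ ∈ B} | C] | P]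
  = E[1_{X ∈ A} | P] E[1_{τ ∈ B} | P]`.
-/

open MeasureTheory ProbabilityTheory

namespace ProbabilityTheory

variable {Ω : Type*} {m m₁ m₂ mP mC mΩ : MeasurableSpace Ω} {μ : Measure Ω} {s t : Set Ω}

lemma ae_norm_condExp_indicator_le_one : ∀ᵐ ω ∂μ, ‖(μ⟦s | m⟧) ω‖ ≤ 1 := by
  refine ae_bdd_abs_condExp_of_ae_bdd_abs (.of_forall fun ω => ?_)
  by_cases hω : ω ∈ s <;> simp [hω]

lemma condExp_condExp_indicator_mul [IsFiniteMeasure μ] (hm : m ≤ mΩ) {g : Ω → ℝ}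
    (hg : Integrable g μ) :
    μ[μ⟦s | m⟧ * g | m] =ᵐ[μ] μ⟦s | m⟧ * μ[g | m] :=
  condExp_stronglyMeasurable_mul_of_bound hm stronglyMeasurable_condExp hg 1
    ae_norm_condExp_indicator_le_one

variable [StandardBorelSpace Ω] [IsFiniteMeasure μ]

lemma CondIndep.condExp_indicator_eq_of_le (hPC : mP ≤ mC) (hC : mC ≤ mΩ) (hm₁ : m₁ ≤ mΩ)
    (h : CondIndep mP m₁ mC (hPC.trans hC) μ) (hs : MeasurableSet[m₁] s) :
    μ⟦s | mP⟧ =ᵐ[μ] μ⟦s | mC⟧ := by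
  have hP := hPC.trans hC
  rw [condIndep_iff _ _ _ hP hm₁ hC] at h
  refine ae_eq_condExp_of_forall_setIntegral_eq hC ((integrable_const 1).indicator (hm₁ s hs))
    (fun _ _ _ => integrable_condExp.integrableOn) (fun t ht _ => ?_)
    (stronglyMeasurable_condExp.mono hPC).aestronglyMeasurable
  have ht' : MeasurableSet t := hC t ht
  calc ∫ ω in t, (μ⟦s | mP⟧) ω ∂μ
      = ∫ ω, (μ⟦s | mP⟧ * t.indicator fun _ => (1 : ℝ)) ω ∂μ := by
        rw [← integral_indicator ht']
        congr 1 with ω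
        by_cases hω : ω ∈ t <;> simp [hω]
    _ = ∫ ω, (μ⟦s | mP⟧ * μ⟦t | mP⟧) ω ∂μ := by
        rw [← integral_condExp hP]
        exact integral_congr_ae
          (condExp_condExp_indicator_mul hP ((integrable_const 1).indicator ht'))
    _ = μ.real (s ∩ t) := by
        rw [← integral_congr_ae (h s t hs ht), integral_condExp hP]
        exact integral_indicator_one ((hm₁ s hs).inter ht')
    _ = ∫ ω in t, s.indicator (fun _ => (1 : ℝ)) ω ∂μ := by
        rw [setIntegral_indicator (hm₁ s hs), Set.inter_comm]
        simp

theorem CondIndep.of_condIndep_of_le (hPC : mP ≤ mC) (hC : mC ≤ mΩ) (hm₁ : m₁ ≤ mΩ)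
    (hm₂ : m₂ ≤ mΩ) (hbal : CondIndep mP m₁ mC (hPC.trans hC) μ)
    (hsel : CondIndep mC m₁ m₂ hC μ) : CondIndep mP m₁ m₂ (hPC.trans hC) μ := by
  have hP := hPC.trans hC
  rw [condIndep_iff _ _ _ hC hm₁ hm₂] at hsel
  rw [condIndep_iff _ _ _ hP hm₁ hm₂]
  intro s t hs ht
  calc μ⟦s ∩ t | mP⟧
      =ᵐ[μ] μ[μ⟦s ∩ t | mC⟧ | mP] := (condExp_condExp_of_le hPC hC).symm
    _ =ᵐ[μ] μ[μ⟦s | mP⟧ * μ⟦t | mC⟧ | mP] := by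
        refine condExp_congr_ae ?_
        filter_upwards [hsel s t hs ht, hbal.condExp_indicator_eq_of_le hPC hC hm₁ hs]
          with ω hst hs'
        simp [hst, hs']
    _ =ᵐ[μ] μ⟦s | mP⟧ * μ[μ⟦t | mC⟧ | mP] := condExp_condExp_indicator_mul hP integrable_condExp
    _ =ᵐ[μ] μ⟦s | mP⟧ * μ⟦t | mP⟧ := (condExp_condExp_of_le hPC hC).mul_left

end ProbabilityTheory

theorem unconfoundedness_given_balancing_score_general
    {Ω β γt γc δ : Type*} [mΩ : MeasurableSpace Ω] [StandardBorelSpace Ω]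
    [MeasurableSpace β] [MeasurableSpace γt] [MeasurableSpace γc] [MeasurableSpace δ]
    {μ : Measure Ω} [IsProbabilityMeasure μ]
    (X : Ω → β) (τ : Ω → γt) (C : Ω → γc) (f : γc → δ)
    (hX : Measurable X) (hτ : Measurable τ) (hf : Measurable f)
    (hleC : MeasurableSpace.comap C inferInstance ≤ mΩ)
    (hleP : MeasurableSpace.comap (fun ω => f (C ω)) inferInstance ≤ mΩ)
    (hbal : CondIndepFun (MeasurableSpace.comap (fun ω => f (C ω)) inferInstance) hleP X C μ)
    (hsel : CondIndepFun (MeasurableSpace.comap C inferInstance) hleC X τ μ) :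
    CondIndepFun (MeasurableSpace.comap (fun ω => f (C ω)) inferInstance) hleP X τ μ := by
  have hPC : MeasurableSpace.comap (fun ω => f (C ω)) inferInstance
      ≤ MeasurableSpace.comap C inferInstance :=
    MeasurableSpace.comap_comp ▸ MeasurableSpace.comap_mono hf.comap_le
  rw [condIndepFun_iff_condIndep] at hbal hsel ⊢
  exact hbal.of_condIndep_of_le hPC hleC hX.comap_le hτ.comap_le hsel

/-- If `P = f(C)` is a balancing score (`X ⊥ C | P`) and selection on
observables holds (`X ⊥ τ | C`), then unconfoundedness holds given the score:
`X ⊥ τ | P`. -/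
theorem unconfoundedness_given_balancing_score
    {Ω β γt γc δ : Type*} [mΩ : MeasurableSpace Ω] [StandardBorelSpace Ω]
    [MeasurableSpace β] [MeasurableSpace γt] [MeasurableSpace γc] [MeasurableSpace δ]
    {μ : Measure Ω} [IsProbabilityMeasure μ]
    (X : Ω → β) (τ : Ω → γt) (C : Ω → γc) (f : γc → δ)
    (hX : Measurable X) (hτ : Measurable τ) (hC : Measurable C) (hf : Measurable f)
    (hleC : MeasurableSpace.comap C inferInstance ≤ mΩ)
    (hleP : MeasurableSpace.comap (fun ω => f (C ω)) inferInstance ≤ mΩ)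
    (hbal : CondIndepFun (MeasurableSpace.comap (fun ω => f (C ω)) inferInstance) hleP X C μ)
    (hsel : CondIndepFun (MeasurableSpace.comap C inferInstance) hleC X τ μ) :
    CondIndepFun (MeasurableSpace.comap (fun ω => f (C ω)) inferInstance) hleP X τ μ :=
  unconfoundedness_given_balancing_score_general (mΩ := mΩ) X τ C f hX hτ hf hleC hleP hbal hsel
end
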